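/- arXiv:0906.1439 — 4 statements merged into one kernel-verified Lean document; each statement's English description precedes it below -/
import Mathlib

section
/- With the same data, the equation C_z = −(H − i√α) A − 2 p e^{−2u} Ā holds for all z ∈ ℂ, where C_z = ∂C/∂z. -/
/-- `D(z) = 4(1−α)|z|² + (H²+α)(|z|²+1)²`. -/
noncomputable def Dd (H α : ℝ) (z : ℂ) : ℝ :=
  4 * (1 - α) * Complex.normSq z + (H ^ 2 + α) * (Complex.normSq z + 1) ^ 2

/-- `A(z) = −2(H + i√α) z̄ / D(z)`. -/
noncomputable def Af (H α : ℝ) (z : ℂ) : ℂ :=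
  -2 * ((H : ℂ) + (Real.sqrt α : ℂ) * Complex.I) * (starRingEnd ℂ) z / (Dd H α z : ℂ)

/-- `C(z) = (|z|² − 1)/(|z|² + 1)`. -/
noncomputable def Cf (z : ℂ) : ℝ := (Complex.normSq z - 1) / (Complex.normSq z + 1)

/-- `e^{2u(z)} = 4(|z|²+1)²(H²+α)/D(z)²`. -/
noncomputable def e2u (H α : ℝ) (z : ℂ) : ℝ :=
  4 * (Complex.normSq z + 1) ^ 2 * (H ^ 2 + α) / (Dd H α z) ^ 2

/-- `p(z) = (2(1−α)/(H + i√α)) A(z)²`. -/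
noncomputable def pf (H α : ℝ) (z : ℂ) : ℂ :=
  2 * ((1 : ℂ) - α) / ((H : ℂ) + (Real.sqrt α : ℂ) * Complex.I) * (Af H α z) ^ 2

/-- Wirtinger derivative `∂_{z̄} = (∂_x + i ∂_y)/2`. -/
noncomputable def dzbar (f : ℂ → ℂ) (z : ℂ) : ℂ :=
  (fderiv ℝ f z 1 + Complex.I * fderiv ℝ f z Complex.I) / 2

/-- Wirtinger derivative `∂_z = (∂_x − i ∂_y)/2`. -/
noncomputable def dz (f : ℂ → ℂ) (z : ℂ) : ℂ :=
  (fderiv ℝ f z 1 - Complex.I * fderiv ℝ f z Complex.I) / 2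

/-!
Since `C = f(|z|²)` with `f t = (t - 1)/(t + 1)` and `∂_z |z|² = z̄`, the chain rule gives
`C_z = f'(|z|²) z̄ = 2 z̄ / (|z|² + 1)²`. On the right-hand side `A`, `Ā`, `p` and `e^{-2u}` are
rational in `z`, `z̄`, `H ± i√α`; using `(H + i√α)(H − i√α) = H² + α` and `z z̄ = |z|²`, clearing
denominators reduces the identity to the definition of `D`.
-/

open Complex ComplexConjugate

lemma hasFDerivAt_normSq (z : ℂ) : HasFDerivAt normSq (2 • innerSL ℝ z) z := by
  have : (normSq : ℂ → ℝ) = fun w => ‖w‖ ^ 2 := funext normSq_eq_norm_sq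
  rw [this]
  exact (hasStrictFDerivAt_norm_sq z).hasFDerivAt

lemma dz_ofReal_comp_normSq {f : ℝ → ℝ} {f' : ℝ} {z : ℂ} (hf : HasDerivAt f f' (normSq z)) :
    dz (fun w => ((f (normSq w) : ℝ) : ℂ)) z = f' * conj z := by
  have h : HasFDerivAt (fun w => ((f (normSq w) : ℝ) : ℂ)) _ z :=
    ofRealCLM.hasFDerivAt.comp z (hf.comp_hasFDerivAt z (hasFDerivAt_normSq z))
  rw [dz, h.fderiv]
  apply Complex.ext <;> simp [Complex.inner, mul_div_assoc, neg_div]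

lemma normSq_add_one_pos (z : ℂ) : 0 < normSq z + 1 := by
  linarith [normSq_nonneg z]

lemma hasDerivAt_sub_one_div_add_one {t : ℝ} (ht : t + 1 ≠ 0) :
    HasDerivAt (fun t => (t - 1) / (t + 1)) (2 / (t + 1) ^ 2) t := by
  refine (((hasDerivAt_id t).sub_const 1).div ((hasDerivAt_id t).add_const 1) ht).congr_deriv ?_
  simp only [id_eq]; ring

lemma dz_Cf (z : ℂ) : dz (fun w => ((Cf w : ℝ) : ℂ)) z = 2 / (normSq z + 1) ^ 2 * conj z := by
  exact_mod_cast dz_ofReal_comp_normSq (hasDerivAt_sub_one_div_add_one (normSq_add_one_pos z).ne')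

lemma cz_rational_identity {K : Type*} [Field K] [CharZero K] {a b κ z w α ρ D : K} (ha : a ≠ 0)
    (hκ : κ ≠ 0) (hρ : ρ + 1 ≠ 0) (hD : D ≠ 0) (hab : a * b = κ) (hzw : z * w = ρ)
    (hD_eq : D = 4 * (1 - α) * ρ + κ * (ρ + 1) ^ 2) :
    2 / (ρ + 1) ^ 2 * w = -b * (-2 * a * w / D)
      - 2 * (2 * (1 - α) / a * (-2 * a * w / D) ^ 2) * (4 * (ρ + 1) ^ 2 * κ / D ^ 2)⁻¹
        * (-2 * b * z / D) := by
  have hb : b ≠ 0 := right_ne_zero_of_mul (hab ▸ hκ)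
  subst hab
  field_simp
  linear_combination 4 * w * hD_eq - 16 * w * (1 - α) * hzw

lemma conj_Af (H α : ℝ) (z : ℂ) :
    conj (Af H α z) = -2 * ((H : ℂ) - (Real.sqrt α : ℂ) * I) * z / (Dd H α z : ℂ) := by
  simp only [Af, map_div₀, map_mul, map_neg, map_ofNat, map_add, conj_conj, conj_ofReal, conj_I]
  ring

theorem stmt7_general (H α : ℝ) (hα : 0 < α)
    (hD : ∀ z : ℂ, 0 < Dd H α z) (z : ℂ) :
    dz (fun w => ((Cf w : ℝ) : ℂ)) z
      = -((H : ℂ) - (Real.sqrt α : ℂ) * Complex.I) * Af H α z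
        - 2 * pf H α z * ((e2u H α z : ℂ))⁻¹ * (starRingEnd ℂ) (Af H α z) := by
  have hab : ((H : ℂ) + Real.sqrt α * I) * (H - Real.sqrt α * I) = H ^ 2 + α := by
    have hs : ((Real.sqrt α : ℝ) : ℂ) ^ 2 = α := by exact_mod_cast Real.sq_sqrt hα.le
    linear_combination (-((Real.sqrt α : ℝ) : ℂ) ^ 2) * I_sq + hs
  have hκ : (H : ℂ) ^ 2 + α ≠ 0 := by exact_mod_cast (by positivity : H ^ 2 + α ≠ 0)
  have hρ : (normSq z : ℂ) + 1 ≠ 0 := by exact_mod_cast (normSq_add_one_pos z).ne'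
  have hDd : (Dd H α z : ℂ) = 4 * (1 - α) * normSq z + (H ^ 2 + α) * (normSq z + 1) ^ 2 := by
    push_cast [Dd]; rfl
  rw [dz_Cf, conj_Af, pf, Af, e2u]
  push_cast
  exact cz_rational_identity (left_ne_zero_of_mul (hab ▸ hκ)) hκ hρ (by exact_mod_cast (hD z).ne')
    hab (mul_conj z) hDd

theorem stmt7 (H α : ℝ) (hH : 0 ≤ H) (hα : 0 < α)
    (hD : ∀ z : ℂ, 0 < Dd H α z) (z : ℂ) :
    dz (fun w => ((Cf w : ℝ) : ℂ)) z
      = -((H : ℂ) - (Real.sqrt α : ℂ) * Complex.I) * Af H α z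
        - 2 * pf H α z * ((e2u H α z : ℂ))⁻¹ * (starRingEnd ℂ) (Af H α z) :=
  stmt7_general H α hα hD z
end

section
/- Let α > 1, H ≥ 0, and set h(x) = (√(α−1)/√(H²+1)) tanh x. Then f(x) = (1/(2(H²+1))) [1 + h(x)·arctan(h(x))] satisfies f''(x) + (2/cosh²x) f(x) = (H²+α) cosh²x / ((H²+α)cosh²x + 1−α)² for all x ∈ ℝ. -/
/-!
Write `g = k tanh` with `k = √(α - 1) / √(H² + 1)`, so that `f = (1 + g arctan g) / (2 (H² + 1))`.
Since `tanh` solves `y'' + 2 sech² y = 0`, applying `y ↦ y'' + 2 sech² y` to `g arctan g` cancels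
every term containing `arctan g`, leaving the rational function `2 (1 + k²) sech² / (1 + g²)²`.
Finally `α - 1 = k² (H² + 1)` turns `(H² + α) cosh² + 1 - α` into `(H² + 1) cosh² (1 + g²)`.
-/

open Real

namespace Real

theorem inv_cosh_sq (x : ℝ) : (cosh x ^ 2)⁻¹ = 1 - tanh x ^ 2 := by
  have := cosh_pos x
  rw [tanh_eq_sinh_div_cosh, div_pow]
  field_simp
  linear_combination -cosh_sq_sub_sinh_sq x

theorem hasDerivAt_tanh (x : ℝ) : HasDerivAt tanh (1 - tanh x ^ 2) x := by
  rw [← inv_cosh_sq, show tanh = sinh / cosh from funext tanh_eq_sinh_div_cosh]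
  refine ((hasDerivAt_sinh x).div (hasDerivAt_cosh x) (cosh_pos x).ne').congr_deriv ?_
  rw [← sq, ← sq, cosh_sq_sub_sinh_sq, one_div]

end Real

noncomputable def tanhArctan (k x : ℝ) : ℝ := 1 + k * tanh x * arctan (k * tanh x)

theorem hasDerivAt_tanhArctan (k x : ℝ) :
    HasDerivAt (tanhArctan k)
      (k * (1 - tanh x ^ 2) * (arctan (k * tanh x) + k * tanh x / (1 + (k * tanh x) ^ 2))) x := by
  have hg := (hasDerivAt_tanh x).const_mul k
  have hpos : 0 < 1 + (k * tanh x) ^ 2 := by positivity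
  refine ((hg.fun_mul hg.arctan).const_add 1).congr_deriv ?_
  field_simp

theorem hasDerivAt_deriv_tanhArctan (k x : ℝ) :
    HasDerivAt (deriv (tanhArctan k))
      (-2 * k * tanh x * (1 - tanh x ^ 2) *
          (arctan (k * tanh x) + k * tanh x / (1 + (k * tanh x) ^ 2)) +
        2 * k ^ 2 * (1 - tanh x ^ 2) ^ 2 / (1 + (k * tanh x) ^ 2) ^ 2) x := by
  rw [funext fun y => (hasDerivAt_tanhArctan k y).deriv]
  have ht := hasDerivAt_tanh x
  have hg := ht.const_mul k
  have hpos : 0 < 1 + (k * tanh x) ^ 2 := by positivity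
  refine ((((ht.fun_pow 2).const_sub 1).const_mul k).fun_mul
    (hg.arctan.fun_add (hg.fun_div ((hg.fun_pow 2).const_add 1) hpos.ne'))).congr_deriv ?_
  field_simp
  ring

theorem tanhArctan_ode (k x : ℝ) :
    deriv (deriv (tanhArctan k)) x + 2 / cosh x ^ 2 * tanhArctan k x
      = 2 * (1 + k ^ 2) * (1 - tanh x ^ 2) / (1 + (k * tanh x) ^ 2) ^ 2 := by
  have hpos : 0 < 1 + (k * tanh x) ^ 2 := by positivity
  rw [(hasDerivAt_deriv_tanhArctan k x).deriv, div_eq_mul_inv 2, inv_cosh_sq, tanhArctan]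
  field_simp
  ring

theorem stmt9_general (α H : ℝ) (hα : 1 < α)
    (h f : ℝ → ℝ)
    (hh : ∀ x, h x = Real.sqrt (α - 1) / Real.sqrt (H ^ 2 + 1) * Real.tanh x)
    (hf : ∀ x, f x = 1 / (2 * (H ^ 2 + 1)) * (1 + h x * Real.arctan (h x)))
    (x : ℝ) :
    deriv (deriv f) x + 2 / Real.cosh x ^ 2 * f x
      = (H ^ 2 + α) * Real.cosh x ^ 2
        / ((H ^ 2 + α) * Real.cosh x ^ 2 + 1 - α) ^ 2 := by
  set k := √(α - 1) / √(H ^ 2 + 1)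
  set c := 1 / (2 * (H ^ 2 + 1)) with hc
  have hH : 0 < H ^ 2 + 1 := by positivity
  have hα_eq : α = k ^ 2 * (H ^ 2 + 1) + 1 := by
    rw [div_pow, sq_sqrt (by linarith), sq_sqrt hH.le]
    field_simp
    ring
  have hfk : f = fun y => c * tanhArctan k y :=
    funext fun y => by rw [hf, hh, tanhArctan]
  have ht : 0 < 1 - tanh x ^ 2 := by
    rw [← inv_cosh_sq]
    positivity
  have hpos : 0 < 1 + (k * tanh x) ^ 2 := by positivity
  have hden : (H ^ 2 + α) * cosh x ^ 2 + 1 - α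
      = (H ^ 2 + 1) * (1 + (k * tanh x) ^ 2) / (1 - tanh x ^ 2) := by
    rw [← inv_inv (cosh x ^ 2), inv_cosh_sq, hα_eq]
    field_simp
    ring
  calc deriv (deriv f) x + 2 / cosh x ^ 2 * f x
      = c * (deriv (deriv (tanhArctan k)) x + 2 / cosh x ^ 2 * tanhArctan k x) := by
        simp only [hfk, deriv_const_mul_field']
        ring
    _ = c * (2 * (1 + k ^ 2) * (1 - tanh x ^ 2) / (1 + (k * tanh x) ^ 2) ^ 2) := by
        rw [tanhArctan_ode]
    _ = _ := by
        rw [hc, hden, ← inv_inv (cosh x ^ 2), inv_cosh_sq, hα_eq]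
        field_simp
        ring

theorem stmt9 (α H : ℝ) (hα : 1 < α) (hH : 0 ≤ H)
    (h f : ℝ → ℝ)
    (hh : ∀ x, h x = Real.sqrt (α - 1) / Real.sqrt (H ^ 2 + 1) * Real.tanh x)
    (hf : ∀ x, f x = 1 / (2 * (H ^ 2 + 1)) * (1 + h x * Real.arctan (h x)))
    (x : ℝ) :
    deriv (deriv f) x + 2 / Real.cosh x ^ 2 * f x
      = (H ^ 2 + α) * Real.cosh x ^ 2
        / ((H ^ 2 + α) * Real.cosh x ^ 2 + 1 - α) ^ 2 :=
  stmt9_general α H hα h f hh hf x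
end

section
/- Let 0 < α ≤ 1/3 and H ≥ 0 with r₁² = 1/2 + H/(2√(1+H²)), r₂² = 1 − r₁². Consider the lattice Λ* ⊂ ℝ² generated by v₁* = (1/(√(1−(1−α)r₁²)))·(1/r₁, r₂(1−α)/√α) and v₂* = (0, √(1−(1−α)r₁²)/(r₂√α)). Then the minimum of |m v₁* + n v₂*|² over (m,n) ∈ ℤ² \ {(0,0)} equals 4(H²+1) if and only if H ≤ (1−3α)/(2√(α(1−2α))). -/
/-! In the basis `v₁, v₂ - v₁` the Gram matrix of the lattice is
`[[1/r₁² + (1-α)/α, -1/r₁²], [-1/r₁², 1/r₁² + 1/r₂²]]`, and `1/r₁² + 1/r₂² = 1/(r₁² r₂²) = 4(H²+1)`.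
As `r₂² ≤ 1/2`, twice the off-diagonal entry is at most the second diagonal entry, so the form is
Lagrange–Gauss reduced exactly when the first diagonal entry dominates the second; a reduced form
takes its minimum at the shorter basis vector because `x² - |xy| + y² ≥ 1` at nonzero integer points.
So the minimum is `4(H²+1)` iff `1/r₂² ≤ (1-α)/α`, which becomes the bound on `H` after substituting
`r₂² = (s - H)/(2s)` with `s = √(1+H²)` and squaring. -/

theorem Int.one_le_sq_sub_abs_mul_add_sq {x y : ℤ} (h : ¬(x = 0 ∧ y = 0)) :
    1 ≤ x ^ 2 - |x * y| + y ^ 2 := by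
  have hpos : 0 < x ^ 2 + y ^ 2 := by
    rcases not_and_or.1 h with hx | hy
    · have := pow_pos (abs_pos.2 hx) 2
      nlinarith [sq_abs x, sq_nonneg y]
    · have := pow_pos (abs_pos.2 hy) 2
      nlinarith [sq_abs y, sq_nonneg x]
  nlinarith [sq_nonneg (|x| - |y|), abs_mul x y, sq_abs x, sq_abs y]

def binaryQuadValues (a b c : ℝ) : Set ℝ :=
  {v | ∃ x y : ℤ, ¬(x = 0 ∧ y = 0) ∧ v = a * x ^ 2 + 2 * b * x * y + c * y ^ 2}

theorem binaryQuadValues_shear (a b c : ℝ) :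
    binaryQuadValues a b c = binaryQuadValues a (b - a) (a - 2 * b + c) := by
  ext v
  constructor
  · rintro ⟨x, y, hxy, rfl⟩
    refine ⟨x + y, y, fun h => hxy ⟨by omega, h.2⟩, ?_⟩
    push_cast
    ring
  · rintro ⟨x, y, hxy, rfl⟩
    refine ⟨x - y, y, fun h => hxy ⟨by omega, h.2⟩, ?_⟩
    push_cast
    ring

theorem setOf_normSq_eq_binaryQuadValues (v₁ v₂ : ℝ × ℝ) :
    {x : ℝ | ∃ m n : ℤ, ¬(m = 0 ∧ n = 0) ∧
        x = ((m : ℝ) * v₁.1 + (n : ℝ) * v₂.1) ^ 2 + ((m : ℝ) * v₁.2 + (n : ℝ) * v₂.2) ^ 2} =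
      binaryQuadValues (v₁.1 ^ 2 + v₁.2 ^ 2) (v₁.1 * v₂.1 + v₁.2 * v₂.2) (v₂.1 ^ 2 + v₂.2 ^ 2) := by
  ext v
  refine exists₂_congr fun m n => and_congr_right fun _ => ?_
  constructor <;> rintro rfl <;> ring

theorem le_binaryQuad_of_reduced {a b c : ℝ} (hbc : 2 * |b| ≤ c) (hca : c ≤ a) {x y : ℤ}
    (hxy : ¬(x = 0 ∧ y = 0)) : c ≤ a * x ^ 2 + 2 * b * x * y + c * y ^ 2 := by
  have hhex : (1 : ℝ) ≤ x ^ 2 - |(x : ℝ) * y| + y ^ 2 := by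
    exact_mod_cast Int.one_le_sq_sub_abs_mul_add_sq hxy
  have hcross : -(|b| * |(x : ℝ) * y|) ≤ b * (x * y) := by
    rw [← abs_mul]
    exact neg_abs_le _
  nlinarith [abs_nonneg ((x : ℝ) * y), sq_nonneg (x : ℝ), abs_nonneg b]

theorem isLeast_binaryQuadValues_iff {a b c : ℝ} (hbc : 2 * |b| ≤ c) :
    IsLeast (binaryQuadValues a b c) c ↔ c ≤ a := by
  constructor
  · exact fun h => h.2 ⟨1, 0, by simp, by simp⟩
  · intro hca
    refine ⟨⟨0, 1, by simp, by simp⟩, ?_⟩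
    rintro v ⟨x, y, hxy, rfl⟩
    exact le_binaryQuad_of_reduced hbc hca hxy

theorem le_div_two_mul_sqrt_iff {α H : ℝ} (hα : 0 < α) (hα3 : α ≤ 1 / 3) (hH : 0 ≤ H) :
    H ≤ (1 - 3 * α) / (2 * √(α * (1 - 2 * α))) ↔ (1 - α) * H ≤ (1 - 3 * α) * √(1 + H ^ 2) := by
  have h3 : 0 ≤ 1 - 3 * α := by linarith
  have hβ : 0 < √(α * (1 - 2 * α)) := Real.sqrt_pos.2 (by nlinarith)
  rw [le_div_iff₀ (by positivity), ← pow_le_pow_iff_left₀ (by positivity) h3 two_ne_zero,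
    ← pow_le_pow_iff_left₀ (a := (1 - α) * H) (by nlinarith) (by positivity) two_ne_zero,
    mul_pow, mul_pow, mul_pow, mul_pow, Real.sq_sqrt (by nlinarith), Real.sq_sqrt (by positivity)]
  -- both sides say `4 α (1 - 2 α) H² ≤ (1 - 3 α)²`
  constructor <;> intro h <;> linarith

theorem binaryQuadValues_gram_eq {α r₁ r₂ : ℝ} (hα : 0 < α) (h1 : 0 < r₁) (h2 : 0 < r₂)
    (hr2 : r₂ ^ 2 = 1 - r₁ ^ 2) {v₁ v₂ : ℝ × ℝ}
    (hv1 : v₁ = ((Real.sqrt (1 - (1 - α) * r₁ ^ 2))⁻¹ * (1 / r₁),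
                 (Real.sqrt (1 - (1 - α) * r₁ ^ 2))⁻¹ * (r₂ * (1 - α) / Real.sqrt α)))
    (hv2 : v₂ = (0, Real.sqrt (1 - (1 - α) * r₁ ^ 2) / (r₂ * Real.sqrt α))) :
    binaryQuadValues (v₁.1 ^ 2 + v₁.2 ^ 2) (v₁.1 * v₂.1 + v₁.2 * v₂.2) (v₂.1 ^ 2 + v₂.2 ^ 2) =
      binaryQuadValues (1 / r₁ ^ 2 + (1 - α) / α) (-(1 / r₁ ^ 2)) (1 / r₁ ^ 2 + 1 / r₂ ^ 2) := by
  have hD : 0 < 1 - (1 - α) * r₁ ^ 2 := by nlinarith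
  have hd := Real.sq_sqrt hD.le
  have hq := Real.sq_sqrt hα.le
  have hd0 := (Real.sqrt_pos.2 hD).ne'
  have hq0 := (Real.sqrt_pos.2 hα).ne'
  have hA : v₁.1 ^ 2 + v₁.2 ^ 2 = 1 / r₁ ^ 2 + (1 - α) / α := by
    simp only [hv1, mul_pow, inv_pow, div_pow, hd, hq, hr2]
    field_simp
    ring
  have hB : v₁.1 * v₂.1 + v₁.2 * v₂.2 = (1 - α) / α := by
    simp only [hv1, hv2]
    field_simp
    rw [hq]
    ring
  have hC : v₂.1 ^ 2 + v₂.2 ^ 2 = 1 / α + r₁ ^ 2 / r₂ ^ 2 := by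
    simp only [hv2, div_pow, mul_pow, hd, hq]
    field_simp
    linear_combination -hr2
  rw [hA, hB, hC, binaryQuadValues_shear]
  congr 1
  · ring
  · field_simp
    linear_combination α * r₁ ^ 2 * hr2

theorem stmt13 (α H r₁ r₂ : ℝ) (hα : 0 < α) (hα3 : α ≤ 1 / 3) (hH : 0 ≤ H)
    (h1 : 0 < r₁) (h2 : 0 < r₂)
    (hr1 : r₁ ^ 2 = 1 / 2 + H / (2 * Real.sqrt (1 + H ^ 2)))
    (hr2 : r₂ ^ 2 = 1 - r₁ ^ 2)
    (v₁ v₂ : ℝ × ℝ)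
    (hv1 : v₁ = ((Real.sqrt (1 - (1 - α) * r₁ ^ 2))⁻¹ * (1 / r₁),
                 (Real.sqrt (1 - (1 - α) * r₁ ^ 2))⁻¹ * (r₂ * (1 - α) / Real.sqrt α)))
    (hv2 : v₂ = (0, Real.sqrt (1 - (1 - α) * r₁ ^ 2) / (r₂ * Real.sqrt α))) :
    IsLeast {x : ℝ | ∃ m n : ℤ, ¬(m = 0 ∧ n = 0) ∧
        x = ((m : ℝ) * v₁.1 + (n : ℝ) * v₂.1) ^ 2 + ((m : ℝ) * v₁.2 + (n : ℝ) * v₂.2) ^ 2}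
      (4 * (H ^ 2 + 1))
    ↔ H ≤ (1 - 3 * α) / (2 * Real.sqrt (α * (1 - 2 * α))) := by
  set s := √(1 + H ^ 2)
  have hs : 0 < s := Real.sqrt_pos.2 (by positivity)
  have hs2 : s ^ 2 = 1 + H ^ 2 := Real.sq_sqrt (by positivity)
  have hr1s : 2 * s * r₁ ^ 2 = s + H := by rw [hr1]; field_simp
  have hr2s : 2 * s * r₂ ^ 2 = s - H := by linear_combination 2 * s * hr2 - hr1s
  have hM : 4 * (H ^ 2 + 1) = 1 / r₁ ^ 2 + 1 / r₂ ^ 2 := by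
    field_simp
    linear_combination (2 * s * r₂ ^ 2) * hr1s + (s + H) * hr2s
      + (1 - 4 * (r₁ ^ 2 * r₂ ^ 2)) * hs2 - hr2
  have hreduced : 2 * |-(1 / r₁ ^ 2)| ≤ 1 / r₁ ^ 2 + 1 / r₂ ^ 2 := by
    have : r₂ ^ 2 ≤ r₁ ^ 2 := by nlinarith
    rw [abs_neg, abs_of_pos (by positivity), two_mul]
    gcongr
  rw [setOf_normSq_eq_binaryQuadValues, binaryQuadValues_gram_eq hα h1 h2 hr2 hv1 hv2, hM,
    isLeast_binaryQuadValues_iff hreduced, add_le_add_iff_left,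
    div_le_div_iff₀ (by positivity) hα, le_div_two_mul_sqrt_iff hα hα3 hH]
  -- multiply by `2 s` and use `2 s r₂² = s - H`
  constructor <;> intro h <;> nlinarith
end

section
/- For ε = +1, there exists a constant α₁ ≈ 0.217 with 0 < α₁ < 1/3 such that for all α with α₁ ≤ α < 1 and all t ∈ [0,1], the quadratic P_t(α) = −(t⁴ + 2t² − 8t + 1)α² + 2(t⁴ − 4t + 3)α − (1−t²)² is nonnegative. In particular, for all 1/3 ≤ α ≤ 1 and all t ∈ [0,1], P_t(α) ≥ 0. -/
private lemma key17 (t : ℝ) (ht : 0 ≤ t) (ht1 : t ≤ 1) :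
    0 ≤ -(t ^ 4 + 2 * t ^ 2 - 8 * t + 1) * (11/50 : ℝ) ^ 2
        + 2 * (t ^ 4 - 4 * t + 3) * (11/50 : ℝ) - (1 - t ^ 2) ^ 2 := by
  nlinarith [sq_nonneg (t - 2/5), sq_nonneg (5*t - 2), mul_nonneg ht (sub_nonneg.2 ht1),
    sq_nonneg t, sq_nonneg (1 - t), mul_nonneg (mul_nonneg ht ht) (sub_nonneg.2 ht1),
    mul_nonneg (sq_nonneg (5*t - 2)) (sub_nonneg.2 ht1),
    mul_nonneg (sq_nonneg (5*t - 2)) ht]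

private lemma main17 (α t : ℝ) (hα : (11/50 : ℝ) ≤ α) (hα1 : α ≤ 1)
    (ht : 0 ≤ t) (ht1 : t ≤ 1) :
    0 ≤ -(t ^ 4 + 2 * t ^ 2 - 8 * t + 1) * α ^ 2
        + 2 * (t ^ 4 - 4 * t + 3) * α - (1 - t ^ 2) ^ 2 := by
  have hK := key17 t ht ht1
  have hB : 0 ≤ t ^ 4 - 4 * t + 3 := by
    nlinarith [mul_nonneg (sq_nonneg (t - 1)) (sq_nonneg (t + 1)), sq_nonneg (t - 1)]
  have ha : 0 ≤ α - 11/50 := by linarith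
  have ha1 : 0 ≤ 1 - α := by linarith
  rcases le_or_gt 0 (t ^ 4 + 2 * t ^ 2 - 8 * t + 1) with hA | hA
  · nlinarith [mul_nonneg hK ha1, mul_nonneg (mul_nonneg hA ha) ha1, ha, hK]
  · nlinarith [mul_nonneg ha hB,
      mul_nonneg (mul_nonneg ha (by linarith : (0:ℝ) ≤ -(t ^ 4 + 2 * t ^ 2 - 8 * t + 1)))
        (by linarith : (0:ℝ) ≤ α + 11/50), hK]

theorem stmt17 :
    (∃ α₁ : ℝ, |α₁ - 0.217| < 0.01 ∧ 0 < α₁ ∧ α₁ < 1 / 3 ∧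
      ∀ α : ℝ, α₁ ≤ α → α < 1 → ∀ t ∈ Set.Icc (0 : ℝ) 1,
        0 ≤ -(t ^ 4 + 2 * t ^ 2 - 8 * t + 1) * α ^ 2
            + 2 * (t ^ 4 - 4 * t + 3) * α - (1 - t ^ 2) ^ 2) ∧
    (∀ α : ℝ, 1 / 3 ≤ α → α ≤ 1 → ∀ t ∈ Set.Icc (0 : ℝ) 1,
      0 ≤ -(t ^ 4 + 2 * t ^ 2 - 8 * t + 1) * α ^ 2
          + 2 * (t ^ 4 - 4 * t + 3) * α - (1 - t ^ 2) ^ 2) := by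
  constructor
  · refine ⟨11/50, by norm_num [abs_lt], by norm_num, by norm_num, ?_⟩
    intro α hα hα1 t ht
    exact main17 α t hα (le_of_lt hα1) ht.1 ht.2
  · intro α hα hα1 t ht
    exact main17 α t (by linarith) hα1 ht.1 ht.2
end
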